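/- arXiv:1101.1215 — 3 statements merged into one kernel-verified Lean document; each statement's English description precedes it below -/
import Mathlib

section
/- Let I = (i_1, …, i_s) be a sequence of positive integers satisfying 0 ≤ 2i_{j+1} − i_j < 2^{ρ(i_{j+1})} for all j < s, and let d ≥ 0 with excess e_1 = i_1 − (i_2 + ⋯ + i_s + d) satisfying 0 < e_1 < 2^{ρ(i_1)}. Then every entry i_j of I is odd. -/
/-- `rho n` is the position of the lowest zero bit of `n`. -/
noncomputable def rho (n : ℕ) : ℕ := sInf {i | n.testBit i = false}

lemma rho_eq_zero_of_even {n : ℕ} (h : Even n) : rho n = 0 :=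
  Nat.sInf_eq_zero.mpr (Or.inl (by simp [Nat.testBit_zero, Nat.even_iff.mp h]))

lemma odd_of_pos_of_lt_two_pow_rho {n : ℕ} {e : ℤ} (he₁ : 0 < e) (he₂ : e < 2 ^ rho n) :
    Odd n := by
  by_contra hn
  rw [rho_eq_zero_of_even (Nat.not_odd_iff_even.mp hn), pow_zero] at he₂
  omega

/-- `2 b - a` is odd, hence positive, so it plays the role of an excess for `b`. -/
lemma odd_of_odd_of_two_mul_sub_lt_two_pow_rho {a b : ℕ} (ha : Odd a)
    (h₀ : (0 : ℤ) ≤ 2 * (b : ℤ) - a) (h₁ : 2 * (b : ℤ) - a < 2 ^ rho b) : Odd b := by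
  have hodd : Odd (2 * (b : ℤ) - a) := (even_two_mul _).sub_odd (by exact_mod_cast ha)
  exact odd_of_pos_of_lt_two_pow_rho (lt_of_le_of_ne h₀ (fun h => by simp [← h] at hodd)) h₁

open Finset in
theorem stmt_8_general (s : ℕ) (i : ℕ → ℕ)
    (hadm : ∀ j, j + 1 < s → (0 : ℤ) ≤ 2 * (i (j + 1) : ℤ) - i j)
    (hcurtis : ∀ j, j + 1 < s → 2 * (i (j + 1) : ℤ) - i j < 2 ^ rho (i (j + 1)))
    (e₁ : ℤ)
    (he₁ : 0 < e₁) (he₂ : e₁ < 2 ^ rho (i 0)) :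
    ∀ j < s, Odd (i j) := by
  intro j hj
  induction j with
  | zero => exact odd_of_pos_of_lt_two_pow_rho he₁ he₂
  | succ k ih =>
    exact odd_of_odd_of_two_mul_sub_lt_two_pow_rho (ih (by omega)) (hadm k hj) (hcurtis k hj)

open Finset in
/-- If `I = (i 0, …, i (s-1))` satisfies `0 ≤ 2 i (j+1) - i j < 2 ^ rho (i (j+1))`
for all `j < s - 1` and the excess `e₁ = i 0 - (i 1 + ⋯ + i (s-1) + d)` satisfies
`0 < e₁ < 2 ^ rho (i 0)`, then every entry `i j` is odd. -/
theorem stmt_8 (s : ℕ) (hs : 1 ≤ s) (i : ℕ → ℕ) (hpos : ∀ j < s, 0 < i j)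
    (d : ℕ)
    (hadm : ∀ j, j + 1 < s → (0 : ℤ) ≤ 2 * (i (j + 1) : ℤ) - i j)
    (hcurtis : ∀ j, j + 1 < s → 2 * (i (j + 1) : ℤ) - i j < 2 ^ rho (i (j + 1)))
    (e₁ : ℤ) (he : e₁ = (i 0 : ℤ) - ((∑ k ∈ Finset.Ico 1 s, (i k : ℤ)) + d))
    (he₁ : 0 < e₁) (he₂ : e₁ < 2 ^ rho (i 0)) :
    ∀ j < s, Odd (i j) :=
  stmt_8_general s i hadm hcurtis e₁ he₁ he₂
end

section
/- Let n be a positive integer and suppose 0 < e < 2^{ρ(n)} where ρ(n) is the lowest zero-bit position of n. Then for every a with 0 < a and C(n − a, a) odd, we have a ≥ 2^{ρ(n)} > e; in particular C(n − a, a) is even for all 0 < a ≤ e. -/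
namespace Nat

theorem even_choose_of_testBit {m k i : ℕ} (hm : m.testBit i = false) (hk : k.testBit i = true) :
    Even (m.choose k) := by
  have : Fact (Nat.Prime 2) := ⟨Nat.prime_two⟩
  have hdigit : (m / 2 ^ i % 2).choose (k / 2 ^ i % 2) = 0 := by
    simp only [testBit_eq_decide_div_mod_eq, decide_eq_true_eq, decide_eq_false_iff_not,
      mod_two_ne_one] at hm hk
    rw [hm, hk]
    rfl
  have hlucas := Choose.choose_modEq_choose_mul_prod_range_choose (n := m) (k := k) (p := 2) (i + 1)
  rw [Finset.prod_eq_zero (Finset.self_mem_range_succ i) hdigit, Nat.cast_zero, mul_zero] at hlucas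
  exact even_iff_two_dvd.mpr (Int.natCast_dvd_natCast.mp (Int.modEq_zero_iff_dvd.mp hlucas))

theorem testBit_sub_two_pow_mul_odd {n t b : ℕ} (hn : n.testBit t = true) (hb : Odd b) :
    (n - 2 ^ t * b).testBit t = false := by
  rcases le_or_gt (2 ^ t * b) n with hle | hlt
  · have hpos : 0 < 2 ^ t := by positivity
    have hb_le : b ≤ n / 2 ^ t := (le_div_iff_mul_le hpos).mpr (by rwa [mul_comm])
    have hsplit : n - 2 ^ t * b = 2 ^ t * (n / 2 ^ t - b) + n % 2 ^ t := by
      have := div_add_mod n (2 ^ t)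
      have := Nat.mul_le_mul_left (2 ^ t) hb_le
      rw [Nat.mul_sub]
      omega
    rw [testBit_eq_decide_div_mod_eq] at hn ⊢
    rw [hsplit, mul_add_div hpos, div_eq_of_lt (mod_lt _ hpos), add_zero]
    obtain ⟨r, rfl⟩ := hb
    simp only [decide_eq_true_eq] at hn
    simp only [decide_eq_false_iff_not]
    omega
  · rw [Nat.sub_eq_zero_of_le hlt.le, zero_testBit]

end Nat

theorem testBit_of_lt_rho {n i : ℕ} (h : i < rho n) : n.testBit i = true := by
  simpa using Nat.notMem_of_lt_sInf (s := {i | n.testBit i = false}) h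

theorem even_choose_sub_of_lt_two_pow_rho {n a : ℕ} (ha : 0 < a) (hlt : a < 2 ^ rho n) :
    Even ((n - a).choose a) := by
  obtain ⟨t, b, hb, rfl⟩ := Nat.exists_eq_two_pow_mul_odd ha.ne'
  have ht : t < rho n :=
    (Nat.pow_lt_pow_iff_right (by norm_num)).mp ((Nat.le_mul_of_pos_right _ hb.pos).trans_lt hlt)
  refine Nat.even_choose_of_testBit
    (Nat.testBit_sub_two_pow_mul_odd (testBit_of_lt_rho ht) hb) ?_
  simpa [Nat.testBit_two_pow_mul, Nat.testBit_zero] using Nat.odd_iff.mp hb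

theorem stmt_11_general (n : ℕ) (e : ℕ)
    (he₂ : e < 2 ^ rho n) :
    (∀ a, 0 < a → Odd ((n - a).choose a) → 2 ^ rho n ≤ a ∧ e < 2 ^ rho n) ∧
      (∀ a, 0 < a → a ≤ e → Even ((n - a).choose a)) := by
  refine ⟨fun a ha hodd => ⟨?_, he₂⟩, fun a ha hae => ?_⟩
  · by_contra! hlt
    exact Nat.not_even_iff_odd.mpr hodd (even_choose_sub_of_lt_two_pow_rho ha hlt)
  · exact even_choose_sub_of_lt_two_pow_rho ha (hae.trans_lt he₂)

/-- If `0 < e < 2 ^ rho n` then every `a > 0` with `C(n - a, a)` odd satisfies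
`a ≥ 2 ^ rho n > e`; in particular `C(n - a, a)` is even for all `0 < a ≤ e`. -/
theorem stmt_11 (n : ℕ) (hn : 0 < n) (e : ℕ) (he₁ : 0 < e)
    (he₂ : e < 2 ^ rho n) :
    (∀ a, 0 < a → Odd ((n - a).choose a) → 2 ^ rho n ≤ a ∧ e < 2 ^ rho n) ∧
      (∀ a, 0 < a → a ≤ e → Even ((n - a).choose a)) :=
  stmt_11_general n e he₂
end

section
/- In the polynomial algebra F_2[x_1, x_2, …] graded with deg x_i = d_i > 0, an element that is both primitive (for the standard Hopf algebra structure on a polynomial algebra over F_2 with specified primitives) and decomposable must be a square. -/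
open MvPolynomial TensorProduct

/-- The standard coproduct on a polynomial algebra over `F₂` making the
generators primitive. -/
noncomputable def polyComul (σ : Type*) :
    MvPolynomial σ (ZMod 2) →ₐ[ZMod 2]
      (MvPolynomial σ (ZMod 2)) ⊗[ZMod 2] (MvPolynomial σ (ZMod 2)) :=
  aeval fun i => (X i) ⊗ₜ 1 + 1 ⊗ₜ (X i)

/-- The augmentation ideal (kernel of the constant-coefficient map). -/
noncomputable def augIdeal (σ : Type*) : Ideal (MvPolynomial σ (ZMod 2)) :=
  RingHom.ker (constantCoeff (σ := σ) (R := ZMod 2))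

section Aux

variable {σ : Type*}

/-- The linear map `a ⊗ b ↦ (coeff s b) • a`. -/
noncomputable def stmt16Fs (σ : Type*) (s : σ →₀ ℕ) :
    (MvPolynomial σ (ZMod 2)) ⊗[ZMod 2] (MvPolynomial σ (ZMod 2)) →ₗ[ZMod 2]
      MvPolynomial σ (ZMod 2) :=
  TensorProduct.lift
    (LinearMap.mk₂ (ZMod 2) (fun a b => coeff s b • a)
      (fun a a' b => smul_add _ _ _)
      (fun c a b => smul_comm _ _ _)
      (fun a b b' => by rw [coeff_add, add_smul])
      (fun c a b => by rw [coeff_smul, smul_eq_mul, mul_smul]))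

@[simp] lemma stmt16Fs_tmul (s : σ →₀ ℕ) (a b : MvPolynomial σ (ZMod 2)) :
    stmt16Fs σ s (a ⊗ₜ b) = coeff s b • a := rfl

lemma stmt16Fs_mul_Xl (s : σ →₀ ℕ) (j : σ)
    (u : (MvPolynomial σ (ZMod 2)) ⊗[ZMod 2] (MvPolynomial σ (ZMod 2))) :
    stmt16Fs σ s (u * ((X j : MvPolynomial σ (ZMod 2)) ⊗ₜ 1)) = X j * stmt16Fs σ s u := by
  induction u using TensorProduct.induction_on with
  | zero => simp
  | tmul a b =>
      rw [Algebra.TensorProduct.tmul_mul_tmul, stmt16Fs_tmul, stmt16Fs_tmul, mul_one,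
        mul_smul_comm, mul_comm]
  | add u v hu hv => rw [add_mul, map_add, map_add, hu, hv, mul_add]

lemma stmt16Fs_zero_mul_Xr (j : σ)
    (u : (MvPolynomial σ (ZMod 2)) ⊗[ZMod 2] (MvPolynomial σ (ZMod 2))) :
    stmt16Fs σ 0 (u * ((1 : MvPolynomial σ (ZMod 2)) ⊗ₜ X j)) = 0 := by
  classical
  induction u using TensorProduct.induction_on with
  | zero => simp
  | tmul a b =>
      rw [Algebra.TensorProduct.tmul_mul_tmul, stmt16Fs_tmul, coeff_mul_X']
      simp
  | add u v hu hv => rw [add_mul, map_add, hu, hv, add_zero]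

lemma stmt16Fs_single_mul_Xr [DecidableEq σ] (i j : σ)
    (u : (MvPolynomial σ (ZMod 2)) ⊗[ZMod 2] (MvPolynomial σ (ZMod 2))) :
    stmt16Fs σ (Finsupp.single i 1) (u * ((1 : MvPolynomial σ (ZMod 2)) ⊗ₜ X j)) =
      if i = j then stmt16Fs σ 0 u else 0 := by
  classical
  induction u using TensorProduct.induction_on with
  | zero => simp
  | tmul a b =>
      rw [Algebra.TensorProduct.tmul_mul_tmul, stmt16Fs_tmul, coeff_mul_X']
      by_cases h : i = j
      · subst h
        simp [tsub_self]
      · have : j ∉ (Finsupp.single i 1).support := by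
          simp [Finsupp.mem_support_iff, Finsupp.single_apply, h, Ne.symm h]
        simp [this, h, Ne.symm h]
  | add u v hu hv =>
      rw [add_mul, map_add, hu, hv, map_add]
      by_cases h : i = j <;> simp [h]

lemma stmt16Fs_zero_comul (f : MvPolynomial σ (ZMod 2)) :
    stmt16Fs σ 0 (polyComul σ f) = f := by
  induction f using MvPolynomial.induction_on with
  | C a =>
      rw [polyComul, aeval_C, Algebra.algebraMap_eq_smul_one,
        Algebra.TensorProduct.one_def, map_smul, stmt16Fs_tmul]
      simp [smul_eq_C_mul]
  | add f g hf hg => rw [map_add, map_add, hf, hg]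
  | mul_X f j hf =>
      rw [map_mul, polyComul, aeval_X, ← polyComul, mul_add, map_add,
        stmt16Fs_mul_Xl, stmt16Fs_zero_mul_Xr, hf, add_zero, mul_comm]

lemma stmt16Fs_single_comul [DecidableEq σ] (i : σ) (f : MvPolynomial σ (ZMod 2)) :
    stmt16Fs σ (Finsupp.single i 1) (polyComul σ f) = pderiv i f := by
  induction f using MvPolynomial.induction_on with
  | C a =>
      rw [polyComul, aeval_C, Algebra.algebraMap_eq_smul_one,
        Algebra.TensorProduct.one_def, map_smul, stmt16Fs_tmul, pderiv_C]
      have h1 : coeff (Finsupp.single i 1) (1 : MvPolynomial σ (ZMod 2)) = 0 := by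
        rw [coeff_one, if_neg]
        exact fun h => one_ne_zero (Finsupp.single_eq_zero.mp h.symm)
      rw [h1, zero_smul, smul_zero]
  | add f g hf hg => rw [map_add, map_add, hf, hg, map_add]
  | mul_X f j hf =>
      rw [map_mul, polyComul, aeval_X, ← polyComul, mul_add, map_add,
        stmt16Fs_mul_Xl, stmt16Fs_single_mul_Xr, hf, stmt16Fs_zero_comul, pderiv_mul]
      classical
      by_cases h : i = j
      · subst h
        rw [if_pos rfl, pderiv_X_self, mul_one, mul_comm, add_comm]
      · rw [if_neg h, pderiv_X_of_ne (Ne.symm h), mul_zero, add_zero, add_zero, mul_comm]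

lemma stmt16_coeff_single (ξ : MvPolynomial σ (ZMod 2)) (h : ξ ∈ (augIdeal σ) ^ 2) (i : σ) :
    coeff (Finsupp.single i 1) ξ = 0 := by
  classical
  rw [sq] at h
  refine Submodule.mul_induction_on h (fun a ha b hb => ?_)
    (fun x y hx hy => by rw [coeff_add, hx, hy, add_zero])
  have ha0 : coeff 0 a = 0 := by
    have := RingHom.mem_ker.mp ha
    rwa [show (constantCoeff : MvPolynomial σ (ZMod 2) →+* ZMod 2) a = coeff 0 a from
      congrFun constantCoeff_eq a] at this
  have hb0 : coeff 0 b = 0 := by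
    have := RingHom.mem_ker.mp hb
    rwa [show (constantCoeff : MvPolynomial σ (ZMod 2) →+* ZMod 2) b = coeff 0 b from
      congrFun constantCoeff_eq b] at this
  rw [coeff_mul]
  refine Finset.sum_eq_zero fun p hp => ?_
  rw [Finset.HasAntidiagonal.mem_antidiagonal] at hp
  have hpt : ∀ j, p.1 j + p.2 j = (Finsupp.single i 1) j := fun j => by
    rw [← hp]; rfl
  have hcases : p.1 = 0 ∨ p.2 = 0 := by
    rcases Nat.eq_zero_or_pos (p.1 i) with h0 | h0
    · left; ext j
      rw [Finsupp.coe_zero, Pi.zero_apply]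
      have := hpt j
      rcases eq_or_ne j i with rfl | hji
      · simpa using h0
      · rw [Finsupp.single_apply, if_neg (Ne.symm hji)] at this; omega
    · right; ext j
      rw [Finsupp.coe_zero, Pi.zero_apply]
      have := hpt j
      rcases eq_or_ne j i with rfl | hji
      · rw [Finsupp.single_apply, if_pos rfl] at this; omega
      · rw [Finsupp.single_apply, if_neg (Ne.symm hji)] at this; omega
  rcases hcases with h0 | h0
  · rw [h0, ha0, zero_mul]
  · rw [h0, hb0, mul_zero]

lemma stmt16_even (ξ : MvPolynomial σ (ZMod 2)) (i : σ) (h : pderiv i ξ = 0)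
    (m : σ →₀ ℕ) (hm : m ∈ ξ.support) : Even (m i) := by
  classical
  rcases Nat.eq_zero_or_pos (m i) with h0 | h0
  · simp [h0]
  have hexp : (pderiv i) ξ =
      ∑ v ∈ ξ.support, monomial (v - Finsupp.single i 1) (coeff v ξ * (v i : ZMod 2)) := by
    conv_lhs => rw [← support_sum_monomial_coeff ξ]
    rw [map_sum]
    exact Finset.sum_congr rfl fun v _ => pderiv_monomial
  have hc : coeff (m - Finsupp.single i 1)
      (∑ v ∈ ξ.support, monomial (v - Finsupp.single i 1) (coeff v ξ * (v i : ZMod 2))) = 0 := by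
    rw [← hexp, h, coeff_zero]
  rw [coeff_sum] at hc
  have hsum : (∑ v ∈ ξ.support,
      coeff (m - Finsupp.single i 1)
        (monomial (v - Finsupp.single i 1) (coeff v ξ * (v i : ZMod 2)))) =
      coeff m ξ * (m i : ZMod 2) := by
    rw [Finset.sum_eq_single m]
    · rw [coeff_monomial, if_pos rfl]
    · intro v hv hvm
      rw [coeff_monomial]
      rcases Nat.eq_zero_or_pos (v i) with hv0 | hv0
      · rw [hv0]
        simp
      · rw [if_neg]
        intro heq
        apply hvm
        ext j
        have hj := DFunLike.congr_fun heq j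
        rw [Finsupp.tsub_apply, Finsupp.tsub_apply] at hj
        rcases eq_or_ne j i with rfl | hji
        · rw [Finsupp.single_apply, if_pos rfl] at hj
          omega
        · rw [Finsupp.single_apply, if_neg (Ne.symm hji)] at hj
          omega
    · intro hm'
      exact absurd hm hm'
  rw [hsum] at hc
  rcases mul_eq_zero.mp hc with hc0 | hc0
  · exact absurd hc0 (mem_support_iff.mp hm)
  · have : (2 : ℕ) ∣ m i := (ZMod.natCast_eq_zero_iff _ _).mp hc0
    exact even_iff_two_dvd.mpr this

end Aux

/-- In the polynomial Hopf algebra `F₂[x_i]` with primitive generators, every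
element that is both primitive and decomposable is a square. -/
theorem stmt_16 (σ : Type*) (ξ : MvPolynomial σ (ZMod 2))
    (hprim : polyComul σ ξ = ξ ⊗ₜ 1 + 1 ⊗ₜ ξ)
    (hdec : ξ ∈ (augIdeal σ) ^ 2) :
    ∃ η : MvPolynomial σ (ZMod 2), ξ = η ^ 2 := by
  classical
  have hcoeff1 : ∀ i, coeff (Finsupp.single i 1) ξ = 0 := stmt16_coeff_single ξ hdec
  have hpd : ∀ i, pderiv i ξ = 0 := by
    intro i
    have h := congrArg (stmt16Fs σ (Finsupp.single i 1)) hprim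
    rw [stmt16Fs_single_comul, map_add, stmt16Fs_tmul, stmt16Fs_tmul, hcoeff1 i] at h
    have h1 : coeff (Finsupp.single i 1) (1 : MvPolynomial σ (ZMod 2)) = 0 := by
      rw [coeff_one, if_neg]
      exact fun hh => one_ne_zero (Finsupp.single_eq_zero.mp hh.symm)
    rw [h1, zero_smul, zero_smul, add_zero] at h
    exact h
  have heven : ∀ m ∈ ξ.support, ∀ i, Even (m i) := fun m hm i =>
    stmt16_even ξ i (hpd i) m hm
  refine ⟨∑ m ∈ ξ.support, monomial (m.mapRange (· / 2) (by simp)) (coeff m ξ), ?_⟩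
  have hsq : (∑ m ∈ ξ.support, monomial (m.mapRange (· / 2) (by simp)) (coeff m ξ)) ^ 2 =
      ∑ m ∈ ξ.support, monomial m (coeff m ξ) := by
    rw [sum_pow_char]
    refine Finset.sum_congr rfl fun m hm => ?_
    have hexp2 : (2 • m.mapRange (· / 2) (by simp)) = m := by
      ext j
      rw [Finsupp.smul_apply, Finsupp.mapRange_apply, smul_eq_mul]
      exact Nat.mul_div_cancel' (even_iff_two_dvd.mp (heven m hm j))
    have hc2 : ∀ c : ZMod 2, c ^ 2 = c := by decide
    rw [monomial_pow, hexp2, hc2]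
  rw [hsq, support_sum_monomial_coeff]
end
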